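/- Let K be a field of characteristic zero and consider the shift endomorphisms σ_x, σ_y of K[x,y] with σ_x(x)=x+1, σ_x(y)=y, σ_y(x)=x, σ_y(y)=y+1. Suppose p ∈ K[x,y] is irreducible with deg_x(p) > 0 and deg_y(p) > 0, and suppose there exist s ∈ ℕ, s ≥ 1, and t ∈ ℤ with σ_x^s(p) = σ_y^t(p). Then p is integer-linear: p(x,y) = q(ax+by) for some integers a, b and some univariate polynomial q ∈ K[z]. -/

import Mathlib

open MvPolynomial

/-- The substitution x ↦ x + m, y ↦ y on K[x,y] (0 = x, 1 = y). -/
noncomputable def shiftXBy {K : Type*} [CommRing K] (m : K) :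
    MvPolynomial (Fin 2) K →+* MvPolynomial (Fin 2) K :=
  (aeval (fun i : Fin 2 => if i = 0 then X 0 + C m else X 1) :
    MvPolynomial (Fin 2) K →ₐ[K] MvPolynomial (Fin 2) K).toRingHom

/-- The substitution y ↦ y + m, x ↦ x on K[x,y] (0 = x, 1 = y). -/
noncomputable def shiftYBy {K : Type*} [CommRing K] (m : K) :
    MvPolynomial (Fin 2) K →+* MvPolynomial (Fin 2) K :=
  (aeval (fun i : Fin 2 => if i = 1 then X 1 + C m else X 0) :
    MvPolynomial (Fin 2) K →ₐ[K] MvPolynomial (Fin 2) K).toRingHom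


/-- A univariate polynomial over a char-zero domain which is invariant under a
nonzero shift is constant. -/
theorem periodic_poly_eq_C {R : Type*} [CommRing R] [IsDomain R] [CharZero R]
    (c : R) (hc : c ≠ 0) (g : Polynomial R)
    (hg : g.comp (Polynomial.X + Polynomial.C c) = g) :
    g = Polynomial.C (g.eval 0) := by
  have key : ∀ n : ℕ, g.comp (Polynomial.X + Polynomial.C ((n : R) * c)) = g := by
    intro n
    induction n with
    | zero => simp
    | succ n ih =>
      have hq : (Polynomial.X + Polynomial.C c).comp
          (Polynomial.X + Polynomial.C ((n : R) * c)) =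
          Polynomial.X + Polynomial.C (((n : R) + 1) * c) := by
        simp [Polynomial.add_comp]
        ring
      push_cast
      calc g.comp (Polynomial.X + Polynomial.C (((n : R) + 1) * c))
          = g.comp ((Polynomial.X + Polynomial.C c).comp
              (Polynomial.X + Polynomial.C ((n : R) * c))) := by rw [hq]
        _ = (g.comp (Polynomial.X + Polynomial.C c)).comp
              (Polynomial.X + Polynomial.C ((n : R) * c)) := (Polynomial.comp_assoc ..).symm
        _ = g := by rw [hg, ih]
  have heval : ∀ n : ℕ, g.eval ((n : R) * c) = g.eval 0 := by
    intro n
    have := congrArg (Polynomial.eval 0) (key n)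
    simpa [Polynomial.eval_comp] using this
  have hroots : {x | Polynomial.IsRoot (g - Polynomial.C (g.eval 0)) x}.Infinite := by
    apply Set.infinite_of_injective_forall_mem (f := fun n : ℕ => (n : R) * c)
    case hi =>
      intro m n h
      have : ((m : R)) = n := by
        exact mul_right_cancel₀ hc h
      exact_mod_cast this
    case hf =>
      intro n
      simp [Polynomial.IsRoot, heval n]
  have := Polynomial.eq_zero_of_infinite_isRoot _ hroots
  linear_combination this

theorem finSuccEquiv_shiftXBy {K : Type*} [CommRing K] (c : K) (f : MvPolynomial (Fin 2) K) :
    (finSuccEquiv K 1) (shiftXBy c f) =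
      ((finSuccEquiv K 1) f).comp (Polynomial.X + Polynomial.C (C c)) := by
  have H : ((finSuccEquiv K 1 :
        MvPolynomial (Fin 2) K →+* Polynomial (MvPolynomial (Fin 1) K)).comp (shiftXBy c)) =
      (Polynomial.eval₂RingHom Polynomial.C (Polynomial.X + Polynomial.C (C c))).comp
        (finSuccEquiv K 1 : MvPolynomial (Fin 2) K →+* Polynomial (MvPolynomial (Fin 1) K)) := by
    apply MvPolynomial.ringHom_ext
    · intro a
      simp [shiftXBy, finSuccEquiv_apply]
    · intro i
      refine Fin.cases ?_ (fun j => ?_) i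
      · simp [shiftXBy, finSuccEquiv_apply]
      · have hj : j = 0 := Subsingleton.elim j 0
        subst hj
        have hx : (shiftXBy c) (X (Fin.succ 0) : MvPolynomial (Fin 2) K) = X (Fin.succ 0) := by
          simp [shiftXBy]
        simp only [RingHom.comp_apply, RingHom.coe_coe]
        rw [hx, finSuccEquiv_X_succ]
        simp
  have := RingHom.congr_fun H f
  simpa [Polynomial.comp, Polynomial.eval₂RingHom] using this

theorem finSuccEquiv_rename_succ {K : Type*} [CommRing K] (q : MvPolynomial (Fin 1) K) :
    (finSuccEquiv K 1) (rename Fin.succ q) = Polynomial.C q := by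
  have H : ((finSuccEquiv K 1).toAlgHom.comp
        (rename (R := K) (Fin.succ : Fin 1 → Fin 2)) : MvPolynomial (Fin 1) K →ₐ[K] _) =
      Polynomial.CAlgHom := by
    apply MvPolynomial.algHom_ext
    intro i
    have hi : i = 0 := Subsingleton.elim i 0
    subst hi
    have h1 : ((rename (Fin.succ : Fin 1 → Fin 2)) (X 0) : MvPolynomial (Fin 2) K)
        = X (Fin.succ 0) := by simp
    simp only [AlgHom.coe_comp, AlgEquiv.toAlgHom_eq_coe, AlgHom.coe_coe, Function.comp_apply]
    rw [h1, AlgEquiv.coe_algHom, finSuccEquiv_X_succ]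
    rfl
  exact AlgHom.congr_fun H q

/-- A bivariate polynomial invariant under a nonzero shift in x depends only on y. -/
theorem exists_rename_of_shiftX_invariant {K : Type*} [Field K] [CharZero K]
    (c : K) (hc : c ≠ 0) (f : MvPolynomial (Fin 2) K) (hf : shiftXBy c f = f) :
    ∃ r0 : MvPolynomial (Fin 1) K, f = rename Fin.succ r0 := by
  have h1 : ((finSuccEquiv K 1) f).comp (Polynomial.X + Polynomial.C (C c))
      = (finSuccEquiv K 1) f := by
    rw [← finSuccEquiv_shiftXBy, hf]
  have hc' : (C c : MvPolynomial (Fin 1) K) ≠ 0 := by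
    simpa using hc
  have h2 := periodic_poly_eq_C _ hc' _ h1
  refine ⟨((finSuccEquiv K 1) f).eval 0, (finSuccEquiv K 1).injective ?_⟩
  rw [finSuccEquiv_rename_succ, h2]
  simp

/-- Abramov–Petkovšek: an irreducible bivariate polynomial p, genuinely
depending on both x and y, which satisfies p(x+s, y) = p(x, y+t) for some
s ≥ 1 and t ∈ ℤ, is integer-linear: p(x,y) = q(ax + by) for integers a, b and
a univariate polynomial q. -/
theorem shift_equivalent_irreducible_is_integer_linear
    (K : Type*) [Field K] [CharZero K]
    (p : MvPolynomial (Fin 2) K) (hirr : Irreducible p)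
    (hdx : 0 < degreeOf 0 p) (hdy : 0 < degreeOf 1 p)
    (s : ℕ) (hs : 1 ≤ s) (t : ℤ)
    (hshift : shiftXBy ((s : ℕ) : K) p = shiftYBy ((t : ℤ) : K) p) :
    ∃ (a b : ℤ) (q : Polynomial K),
      p = Polynomial.aeval
        ((a : MvPolynomial (Fin 2) K) * X 0 + (b : MvPolynomial (Fin 2) K) * X 1) q := by
  have hs0 : ((s : ℕ) : K) ≠ 0 := Nat.cast_ne_zero.mpr (by omega)
  set sk : K := ((s : ℕ) : K) with hsk
  set tk : K := ((t : ℤ) : K) with htk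
  have hCs : (C sk⁻¹ : MvPolynomial (Fin 2) K) * C sk = 1 := by
    rw [← C_mul, inv_mul_cancel₀ hs0, C_1]
  set u : MvPolynomial (Fin 2) K := C tk * X 0 + C sk * X 1 with hu
  set A : MvPolynomial (Fin 2) K →ₐ[K] MvPolynomial (Fin 2) K :=
    aeval (fun i : Fin 2 => if i = 0 then X 0 else C tk * X 0 + C sk * X 1) with hA
  set Ainv : MvPolynomial (Fin 2) K →ₐ[K] MvPolynomial (Fin 2) K :=
    aeval (fun i : Fin 2 => if i = 0 then X 0 else C sk⁻¹ * (X 1 - C tk * X 0)) with hAinv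
  set U : MvPolynomial (Fin 2) K →ₐ[K] MvPolynomial (Fin 2) K :=
    aeval (fun i : Fin 2 => if i = 0 then X 0 + C sk else X 1 - C tk) with hU
  -- U p = p
  have h1 : (shiftYBy (-tk)).comp (shiftXBy sk) = U.toRingHom := by
    apply MvPolynomial.ringHom_ext
    · intro a; simp [shiftXBy, shiftYBy, hU]
    · intro i
      fin_cases i <;> simp [shiftXBy, shiftYBy, hU, sub_eq_add_neg]
  have h2 : (shiftYBy (-tk)).comp (shiftYBy tk) = RingHom.id _ := by
    apply MvPolynomial.ringHom_ext
    · intro a; simp [shiftYBy]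
    · intro i
      fin_cases i <;> simp [shiftYBy, Fin.ext_iff]
  have hUp : U p = p := by
    have e1 := RingHom.congr_fun h1 p
    have e2 := RingHom.congr_fun h2 p
    simp only [RingHom.comp_apply, AlgHom.toRingHom_eq_coe, RingHom.coe_coe,
      RingHom.id_apply] at e1 e2
    rw [← e1, hshift, e2]
  -- r := Ainv p is invariant under x-shift
  set r : MvPolynomial (Fin 2) K := Ainv p with hr
  have h3 : (shiftXBy sk).comp Ainv.toRingHom = Ainv.toRingHom.comp U.toRingHom := by
    apply MvPolynomial.ringHom_ext
    · intro a; simp [shiftXBy, hAinv, hU]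
    · intro i
      fin_cases i
      · simp [shiftXBy, hAinv, hU]
      · simp only [RingHom.comp_apply, AlgHom.toRingHom_eq_coe, RingHom.coe_coe]
        rw [show (X ⟨1, by omega⟩ : MvPolynomial (Fin 2) K) = X 1 from rfl]
        simp [shiftXBy, hAinv, hU]
        linear_combination (-(C tk) : MvPolynomial (Fin 2) K) * hCs
  have hrshift : shiftXBy sk r = r := by
    have := RingHom.congr_fun h3 p
    simp only [RingHom.comp_apply, AlgHom.toRingHom_eq_coe, RingHom.coe_coe] at this
    rw [hr, this, hUp]
  obtain ⟨r0, hr0⟩ := exists_rename_of_shiftX_invariant sk hs0 r hrshift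
  -- A (Ainv p) = p
  have hAAinv : A.comp Ainv = AlgHom.id K _ := by
    apply MvPolynomial.algHom_ext
    intro i
    fin_cases i
    · simp [hA, hAinv]
    · simp only [AlgHom.coe_comp, Function.comp_apply, AlgHom.coe_id, id_eq]
      rw [show (X ⟨1, by omega⟩ : MvPolynomial (Fin 2) K) = X 1 from rfl]
      simp [hA, hAinv]
      linear_combination (X 1 : MvPolynomial (Fin 2) K) * hCs
  have hp : p = A r := by
    have := AlgHom.congr_fun hAAinv p
    simpa using this.symm
  -- the univariate polynomial
  set q : Polynomial K := aeval (fun _ : Fin 1 => (Polynomial.X : Polynomial K)) r0 with hq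
  have h4 : (Polynomial.aeval u).comp
      (aeval (fun _ : Fin 1 => (Polynomial.X : Polynomial K)) :
        MvPolynomial (Fin 1) K →ₐ[K] Polynomial K) =
      (aeval (fun _ : Fin 1 => u) : MvPolynomial (Fin 1) K →ₐ[K] MvPolynomial (Fin 2) K) := by
    apply MvPolynomial.algHom_ext
    intro i
    simp
  refine ⟨t, (s : ℤ), q, ?_⟩
  have hcast : ((t : ℤ) : MvPolynomial (Fin 2) K) * X 0
      + (((s : ℕ) : ℤ) : MvPolynomial (Fin 2) K) * X 1 = u := by
    rw [hu]
    have e1 : ((t : ℤ) : MvPolynomial (Fin 2) K) = C tk := by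
      rw [htk]; exact (map_intCast (C : K →+* MvPolynomial (Fin 2) K) t).symm
    have e2 : (((s : ℕ) : ℤ) : MvPolynomial (Fin 2) K) = C sk := by
      rw [hsk]; push_cast
      exact (map_natCast (C : K →+* MvPolynomial (Fin 2) K) s).symm
    rw [e1, e2]
  rw [hcast, hp, hr0, hA, aeval_rename, hq]
  have := AlgHom.congr_fun h4 r0
  simp only [AlgHom.coe_comp, Function.comp_apply] at this
  rw [this]
  have h5 : ((fun i : Fin 2 => if i = 0 then X 0 else C tk * X 0 + C sk * X 1) ∘ Fin.succ)
      = (fun _ : Fin 1 => u) := by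
    funext j
    simp [Fin.succ_ne_zero, hu]
  rw [h5]
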